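/- arXiv:2306.07692 — 4 statements merged into one kernel-verified Lean document; each statement's English description precedes it below -/
import Mathlib

section
/- Let (M,g,J) be a Kähler manifold with nonpositive Riemannian sectional curvature. Then for all tangent vectors v, w at the same point, R(v,Jv,w,Jw)^2 ≤ R(v,Jv,v,Jv) · R(w,Jw,w,Jw). -/
set_option maxHeartbeats 1000000 in
/-- On a Kähler manifold with nonpositive sectional curvature,
`R(v,Jv,w,Jw)² ≤ R(v,Jv,v,Jv) · R(w,Jw,w,Jw)` for all tangent vectors `v, w` at a point.
We formalize this pointwise: `E` is the tangent space at the given point, `J` the complex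
structure (an isometric almost-complex structure), and `R` the Riemann curvature tensor,
with the Kähler symmetries as hypotheses. -/
theorem stmt0 {E : Type*} [NormedAddCommGroup E] [InnerProductSpace ℝ E]
    (J : E →ₗ[ℝ] E) (R : E →ₗ[ℝ] E →ₗ[ℝ] E →ₗ[ℝ] E →ₗ[ℝ] ℝ)
    (hJ2 : ∀ v, J (J v) = -v)
    (hJiso : ∀ v w, (inner ℝ (J v) (J w) : ℝ) = inner ℝ v w)
    (hanti : ∀ X Y Z T, R X Y Z T = -R Y X Z T)
    (hpair : ∀ X Y Z T, R X Y Z T = R Z T X Y)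
    (hbianchi : ∀ X Y Z T, R X Y Z T + R Y Z X T + R Z X Y T = 0)
    (hJinv : ∀ X Y Z T, R (J X) (J Y) Z T = R X Y Z T)
    (hsec : ∀ X Y, R X Y X Y ≤ 0) :
    ∀ v w : E,
      (R v (J v) w (J w)) ^ 2 ≤ (R v (J v) v (J v)) * (R w (J w) w (J w)) := by
  -- antisymmetry in the last two slots
  have h1 : ∀ X Y Z T, R X Y Z T = - R X Y T Z := by
    intro X Y Z T
    rw [hpair X Y Z T, hanti Z T X Y, hpair T Z X Y]
  -- J-invariance in the last two slots
  have h2 : ∀ X Y Z T, R X Y (J Z) (J T) = R X Y Z T := by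
    intro X Y Z T
    rw [hpair X Y (J Z) (J T), hJinv Z T X Y, hpair Z T X Y]
  -- key identity II : R(x,Jy,y,Jx) = R(x,Jy,x,Jy)
  have hII : ∀ p q : E, R p (J q) q (J p) = R p (J q) p (J q) := by
    intro p q
    have e1 : R p (J q) (J (J q)) (J p) = R p (J q) (J q) p := h2 p (J q) (J q) p
    have e2 : R p (J q) (J (J q)) (J p) = - R p (J q) q (J p) := by
      rw [hJ2 q]; simp only [map_neg, LinearMap.neg_apply]
    have e3 : R p (J q) (J q) p = - R p (J q) p (J q) := h1 p (J q) (J q) p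
    linarith
  -- A(q,Jp) = A(p,Jq)
  have hA' : ∀ p q : E, R q (J p) q (J p) = R p (J q) p (J q) := by
    intro p q
    have e1 := hJinv q (J p) q (J p)
    rw [hJ2 p] at e1
    simp only [map_neg, LinearMap.neg_apply] at e1
    have e2 := hanti (J q) p q (J p)
    have e3 := hII p q
    linarith
  -- nonpositivity of bisectional curvature term
  have hbis : ∀ a b : E, R a (J a) b (J b) ≤ 0 := by
    intro a b
    have hb' := hbianchi a (J a) b (J b)
    have e2 : R b a (J a) (J b) = R b a a b := h2 b a a b
    have e4 : R b a a b = - R a b a b := hanti b a a b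
    have e3 : R (J a) b a (J b) = - R a (J b) a (J b) := by
      have h5 := hJinv a (J b) a (J b)
      rw [hJ2 b] at h5
      simp only [map_neg, LinearMap.neg_apply] at h5
      linarith
    linarith [hsec a b, hsec a (J b)]
  -- the core inequality : R(a,Ja,a,Ja) + R(b,Jb,b,Jb) - 2 R(a,Ja,b,Jb) ≤ 0
  have hcore : ∀ a b : E,
      R a (J a) a (J a) + R b (J b) b (J b) - 2 * R a (J a) b (J b) ≤ 0 := by
    intro a b
    have hq : 4 * (R a (J a) a (J a) + R b (J b) b (J b) - 2 * R a (J a) b (J b)) =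
        R (a+b) (J (a-b)) (a+b) (J (a-b)) + 2 * R (a+b) (J (a-b)) (a-b) (J (a+b))
          + R (a-b) (J (a+b)) (a-b) (J (a+b)) := by
      have hRsub : ∀ x y z, R (a - b) x y z = R a x y z - R b x y z := by
        intro x y z
        rw [sub_eq_add_neg, ← neg_one_smul ℝ b, map_add, map_smul]
        simp only [LinearMap.add_apply, LinearMap.smul_apply, smul_eq_mul]
        ring
      simp only [map_add, map_sub, hRsub, LinearMap.add_apply, LinearMap.sub_apply]
      linarith [hpair a (J a) a (J a), hpair a (J a) a (J b), hpair a (J a) b (J a),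
        hpair a (J a) b (J b), hpair a (J b) a (J a), hpair a (J b) a (J b),
        hpair a (J b) b (J a), hpair a (J b) b (J b), hpair b (J a) a (J a),
        hpair b (J a) a (J b), hpair b (J a) b (J a), hpair b (J a) b (J b),
        hpair b (J b) a (J a), hpair b (J b) a (J b), hpair b (J b) b (J a),
        hpair b (J b) b (J b)]
    have h2' := hII (a+b) (a-b)
    have h3' := hA' (a+b) (a-b)
    have h4' := hsec (a+b) (J (a-b))
    linarith
  intro v w
  have ha := hsec v (J v)
  have hbw := hsec w (J w)
  have hc := hbis v w
  -- scaled version of the core inequality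
  have hscaled : ∀ t : ℝ,
      R v (J v) v (J v) + t^4 * R w (J w) w (J w)
        - 2 * t^2 * R v (J v) w (J w) ≤ 0 := by
    intro t
    have h := hcore v (t • w)
    simp only [map_smul, LinearMap.smul_apply, smul_eq_mul] at h
    ring_nf at h ⊢
    linarith
  rcases lt_or_eq_of_le hbw with hb | hb
  · -- R w (J w) w (J w) < 0
    have harg : 0 ≤ R v (J v) w (J w) / R w (J w) w (J w) := by
      rw [div_nonneg_iff]; right; exact ⟨hc, hbw⟩
    set t := Real.sqrt (R v (J v) w (J w) / R w (J w) w (J w)) with ht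
    have ht2 : t ^ 2 = R v (J v) w (J w) / R w (J w) w (J w) := Real.sq_sqrt harg
    have ht2b : t ^ 2 * R w (J w) w (J w) = R v (J v) w (J w) := by
      rw [ht2]; exact div_mul_cancel₀ _ (ne_of_lt hb)
    have h := hscaled t
    rw [← ht2b] at h ⊢
    nlinarith [h, hb]
  · -- R w (J w) w (J w) = 0
    have hc0 : R v (J v) w (J w) = 0 := by
      by_contra hne
      have hclt : R v (J v) w (J w) < 0 := lt_of_le_of_ne hc hne
      have harg : 0 ≤ (1 - R v (J v) v (J v)) / (-2 * R v (J v) w (J w)) :=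
        div_nonneg (by linarith) (by linarith)
      set t := Real.sqrt ((1 - R v (J v) v (J v)) / (-2 * R v (J v) w (J w))) with ht
      have ht2 : t ^ 2 = (1 - R v (J v) v (J v)) / (-2 * R v (J v) w (J w)) :=
        Real.sq_sqrt harg
      have hkey : (1 - R v (J v) v (J v)) / (-2 * R v (J v) w (J w))
          * (-2 * R v (J v) w (J w)) = 1 - R v (J v) v (J v) :=
        div_mul_cancel₀ _ (by linarith)
      have h := hscaled t
      have h4 : t ^ 4 = (t ^ 2) ^ 2 := by ring
      rw [h4, ht2, ← hb] at h
      nlinarith [h, hkey]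
    rw [hc0, hb]
    norm_num
end

section
/- Let X be a metric space, Z ⊂ X closed, and U, V open sets with Z ⊂ U, cl(U) ⊂ V. Suppose φ : V → (0,∞) is continuous and an exhaustion relative to X (i.e. for every c, the set {φ ≤ c} has compact closure in X), and ψ : X → ℝ₊ is continuous with ψ⁻¹({0}) ⊂ Z and ψ restricted to X∖U an exhaustion. Then for any open V' with U ⊂ V' and cl(V') ⊂ V, there exists an increasing smooth convex function χ : ℝ₊ → ℝ₊ with χ(0)=0 and χ∘ψ > φ on V'∖U. -/
open Set

/-- Auxiliary: for any function `g` bounded above on rays `Iic c`, and any `δ > 0`, there is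
an entire (real-analytic) convex strictly increasing function `χ` with `χ 0 = 0` which
strictly dominates `g` on `[δ, ∞)`. Built as a power series with sparse coefficients. -/
private lemma stmt5_aux (g : ℝ → ℝ) (δ : ℝ) (hδ : 0 < δ)
    (hg : ∀ c : ℝ, ∃ M, ∀ t ≤ c, g t ≤ M) :
    ∃ χ : ℝ → ℝ, ContDiff ℝ (⊤ : ℕ∞) χ ∧ StrictMonoOn χ (Set.Ici 0) ∧
      ConvexOn ℝ (Set.Ici 0) χ ∧ (∀ t, 0 ≤ t → 0 ≤ χ t) ∧ χ 0 = 0 ∧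
      ∀ t, δ ≤ t → g t < χ t := by
  classical
  set δ0 := min δ 1 with hδ0def
  have hδ0 : 0 < δ0 := lt_min hδ one_pos
  have hδ01 : δ0 ≤ 1 := min_le_right _ _
  choose M hM using hg
  set a : ℕ → ℝ := fun k => max (M (k + 2)) 0 + 1 with ha
  have hapos : ∀ k, 0 < a k := fun k =>
    add_pos_of_nonneg_of_pos (le_max_right _ _) one_pos
  have hag : ∀ k : ℕ, ∀ t : ℝ, t ≤ (k : ℝ) + 2 → g t < a k := by
    intro k t ht
    have h1 : g t ≤ M ((k : ℝ) + 2) := hM _ t ht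
    have h2 : M ((k : ℝ) + 2) ≤ max (M ((k : ℝ) + 2)) 0 := le_max_left _ _
    show g t < max (M ((k : ℝ) + 2)) 0 + 1
    linarith
  -- exponents
  set m : ℕ → ℕ := fun k => ⌈a k⌉₊ with hm
  have ham : ∀ k, a k ≤ 2 ^ m k := by
    intro k
    calc a k ≤ (⌈a k⌉₊ : ℝ) := Nat.le_ceil _
      _ ≤ ((2 ^ ⌈a k⌉₊ : ℕ) : ℝ) := by exact_mod_cast (Nat.lt_two_pow_self).le
      _ = 2 ^ m k := by push_cast; rfl
  set e : ℕ → ℕ := fun k => 3 + k + ∑ j ∈ Finset.range (k + 1), m j with he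
  have hemono : StrictMono e := by
    apply strictMono_nat_of_lt_succ
    intro k
    have : ∑ j ∈ Finset.range (k + 2), m j = (∑ j ∈ Finset.range (k + 1), m j) + m (k + 1) :=
      Finset.sum_range_succ m (k + 1)
    simp only [he, this]
    omega
  have he3 : ∀ k, 3 ≤ e k := fun k => by simp only [he]; omega
  have heme : ∀ k, m k + k + 3 ≤ e k := by
    intro k
    have : m k ≤ ∑ j ∈ Finset.range (k + 1), m j :=
      Finset.single_le_sum (f := m) (fun j _ => Nat.zero_le _) (Finset.self_mem_range_succ k)
    simp only [he]; omega
  have hkey : ∀ k, a k * (2 : ℝ)⁻¹ ^ e k ≤ (2 : ℝ)⁻¹ ^ k := by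
    intro k
    have h1 : a k * (2 : ℝ)⁻¹ ^ e k ≤ 2 ^ m k * (2 : ℝ)⁻¹ ^ e k :=
      mul_le_mul_of_nonneg_right (ham k) (pow_nonneg (by norm_num) _)
    have hmk : m k ≤ e k := le_trans (by omega) (heme k)
    have h2 : (2 : ℝ) ^ m k * (2 : ℝ)⁻¹ ^ e k = (2 : ℝ)⁻¹ ^ (e k - m k) := by
      rw [show e k = m k + (e k - m k) by omega, pow_add, ← mul_assoc, ← mul_pow]
      norm_num
    have h3 : (2 : ℝ)⁻¹ ^ (e k - m k) ≤ (2 : ℝ)⁻¹ ^ k := by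
      apply pow_le_pow_of_le_one (by norm_num) (by norm_num)
      have := heme k; omega
    calc a k * (2 : ℝ)⁻¹ ^ e k ≤ 2 ^ m k * (2 : ℝ)⁻¹ ^ e k := h1
      _ = (2 : ℝ)⁻¹ ^ (e k - m k) := h2
      _ ≤ (2 : ℝ)⁻¹ ^ k := h3
  -- coefficients
  set b : ℝ := a 0 / δ0 ^ 2 with hb
  have hbpos : 0 < b := div_pos (hapos 0) (pow_pos hδ0 2)
  set c : ℕ → ℝ := fun p =>
    (if p = 2 then b else 0) +
      (if h : ∃ k, e k = p then a h.choose * ((h.choose : ℝ) + 1)⁻¹ ^ p else 0) with hc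
  have hcnonneg : ∀ p, 0 ≤ c p := by
    intro p
    apply add_nonneg
    · split_ifs; exacts [hbpos.le, le_refl _]
    · split_ifs with h
      · exact mul_nonneg (hapos _).le (pow_nonneg (by positivity) _)
      · exact le_refl _
  have hce : ∀ k, c (e k) = a k * ((k : ℝ) + 1)⁻¹ ^ e k := by
    intro k
    have hne2 : e k ≠ 2 := by have := he3 k; omega
    have hex : ∃ j, e j = e k := ⟨k, rfl⟩
    have hch : hex.choose = k := hemono.injective hex.choose_spec
    simp only [hc, if_neg hne2, dif_pos hex, hch, zero_add]
  have hc2 : c 2 = b := by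
    have hnex : ¬∃ j, e j = 2 := by
      rintro ⟨j, hj⟩; have := he3 j; omega
    simp only [hc, dif_neg hnex, add_zero, if_pos]
  have hc0 : c 0 = 0 := by
    have hnex : ¬∃ j, e j = 0 := by
      rintro ⟨j, hj⟩; have := he3 j; omega
    simp only [hc, dif_neg hnex, add_zero, if_neg (by norm_num : (0 : ℕ) ≠ 2)]
  -- summability
  have hsum : ∀ r : ℝ, 0 ≤ r → Summable (fun p => c p * r ^ p) := by
    intro r hr
    have h1 : Summable (fun p => (if p = 2 then b else 0) * r ^ p) := by
      apply summable_of_ne_finset_zero (s := {2})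
      intro p hp
      simp only [Finset.mem_singleton] at hp
      simp [hp]
    have h2 : Summable (fun p =>
        (if h : ∃ k, e k = p then a h.choose * ((h.choose : ℝ) + 1)⁻¹ ^ p else 0) * r ^ p) := by
      set F : ℕ → ℝ := fun p =>
        (if h : ∃ k, e k = p then a h.choose * ((h.choose : ℝ) + 1)⁻¹ ^ p else 0) * r ^ p with hF
      have hFzero : ∀ p ∉ Set.range e, F p = 0 := by
        intro p hp
        have : ¬∃ k, e k = p := by
          rintro ⟨k, hk⟩; exact hp ⟨k, hk⟩
        simp [hF, dif_neg this]
      rw [← hemono.injective.summable_iff hFzero]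
      have hFe : ∀ k, (F ∘ e) k = a k * (((k : ℝ) + 1)⁻¹ * r) ^ e k := by
        intro k
        have hne : ∃ j, e j = e k := ⟨k, rfl⟩
        have hch : hne.choose = k := hemono.injective hne.choose_spec
        simp only [Function.comp_apply, hF, dif_pos hne, hch, mul_pow, mul_assoc]
      rw [show (F ∘ e) = fun k => a k * (((k : ℝ) + 1)⁻¹ * r) ^ e k from funext hFe]
      set K : ℕ := ⌈2 * r⌉₊ with hKdef
      rw [← summable_nat_add_iff K]
      have hbound : ∀ n : ℕ, a (n + K) * ((((n + K : ℕ) : ℝ) + 1)⁻¹ * r) ^ e (n + K)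
          ≤ (2 : ℝ)⁻¹ ^ n := by
        intro n
        have hpos : (0 : ℝ) < ((n + K : ℕ) : ℝ) + 1 := by positivity
        have hr2 : (((n + K : ℕ) : ℝ) + 1)⁻¹ * r ≤ 2⁻¹ := by
          rw [inv_mul_le_iff₀ hpos]
          have h2r : 2 * r ≤ (K : ℝ) := Nat.le_ceil _
          push_cast
          linarith [Nat.cast_nonneg (α := ℝ) n]
        have hnn : (0 : ℝ) ≤ (((n + K : ℕ) : ℝ) + 1)⁻¹ * r := by positivity
        calc a (n + K) * ((((n + K : ℕ) : ℝ) + 1)⁻¹ * r) ^ e (n + K)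
            ≤ a (n + K) * (2 : ℝ)⁻¹ ^ e (n + K) :=
              mul_le_mul_of_nonneg_left (pow_le_pow_left₀ hnn hr2 _) (hapos _).le
          _ ≤ (2 : ℝ)⁻¹ ^ (n + K) := hkey _
          _ ≤ (2 : ℝ)⁻¹ ^ n := pow_le_pow_of_le_one (by norm_num) (by norm_num) (by omega)
      apply Summable.of_nonneg_of_le (fun n => by positivity) hbound
      exact summable_geometric_of_lt_one (by norm_num) (by norm_num)
    exact ((h1.add h2).congr (fun p => (add_mul _ _ _).symm))
  -- the function
  set χ : ℝ → ℝ := fun t => ∑' p, c p * t ^ p with hχ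
  have hχzero : χ 0 = 0 := by
    have : ∀ p : ℕ, c p * (0 : ℝ) ^ p = 0 := by
      intro p
      rcases Nat.eq_zero_or_pos p with h | h
      · simp [h, hc0]
      · simp [zero_pow (Nat.pos_iff_ne_zero.1 h)]
    simp only [hχ]
    rw [tsum_congr this, tsum_zero]
  have hχnonneg : ∀ t, 0 ≤ t → 0 ≤ χ t := by
    intro t ht
    exact tsum_nonneg fun p => mul_nonneg (hcnonneg p) (pow_nonneg ht p)
  -- smoothness via analyticity
  have hcontdiff : ContDiff ℝ (⊤ : ℕ∞) χ := by
    set q := FormalMultilinearSeries.ofScalars ℝ c with hq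
    have hrad : q.radius = ⊤ := by
      refine le_antisymm le_top (ENNReal.le_of_forall_nnreal_lt fun r _ => ?_)
      apply q.le_radius_of_summable
      have := hsum r r.coe_nonneg
      refine this.congr fun n => ?_
      rw [hq, FormalMultilinearSeries.ofScalars_norm, Real.norm_eq_abs,
        abs_of_nonneg (hcnonneg n)]
    have hana : AnalyticOnNhd ℝ q.sum univ := by
      intro y _
      refine (q.hasFPowerSeriesOnBall ?_).analyticAt_of_mem ?_
      · rw [hrad]; exact ENNReal.zero_lt_top
      · rw [hrad]; exact EMetric.mem_ball.2 (edist_lt_top _ _)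
    have hχq : χ = q.sum := by
      funext t
      have : q.sum t = FormalMultilinearSeries.ofScalarsSum c t := rfl
      rw [this, FormalMultilinearSeries.ofScalars_sum_eq]
      simp only [hχ, smul_eq_mul]
    rw [hχq]
    exact hana.contDiff
  -- strict monotonicity
  have hmono : StrictMonoOn χ (Set.Ici 0) := by
    intro x hx y hy hxy
    simp only [Set.mem_Ici] at hx hy
    apply Summable.tsum_lt_tsum (i := 2)
    · intro p
      exact mul_le_mul_of_nonneg_left (pow_le_pow_left₀ hx hxy.le p) (hcnonneg p)
    · rw [hc2]
      exact mul_lt_mul_of_pos_left (by nlinarith) hbpos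
    · exact hsum x hx
    · exact hsum y hy
  -- convexity
  have hconv : ConvexOn ℝ (Set.Ici 0) χ := by
    refine ⟨convex_Ici 0, fun x hx y hy α β hα hβ hαβ => ?_⟩
    simp only [smul_eq_mul, Set.mem_Ici] at hx hy ⊢
    have hxy0 : 0 ≤ α * x + β * y := by positivity
    have hsx := hsum x hx
    have hsy := hsum y hy
    have hpoint : ∀ p, c p * (α * x + β * y) ^ p ≤ α * (c p * x ^ p) + β * (c p * y ^ p) := by
      intro p
      have h := (convexOn_pow p).2 hx hy hα hβ hαβ
      simp only [smul_eq_mul] at h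
      calc c p * (α * x + β * y) ^ p ≤ c p * (α * x ^ p + β * y ^ p) :=
            mul_le_mul_of_nonneg_left h (hcnonneg p)
        _ = α * (c p * x ^ p) + β * (c p * y ^ p) := by ring
    calc χ (α * x + β * y) ≤ ∑' p, (α * (c p * x ^ p) + β * (c p * y ^ p)) :=
          Summable.tsum_le_tsum hpoint (hsum _ hxy0) ((hsx.mul_left α).add (hsy.mul_left β))
      _ = α * χ x + β * χ y := by
          rw [Summable.tsum_add (hsx.mul_left α) (hsy.mul_left β), tsum_mul_left, tsum_mul_left]
  -- domination
  have hdom : ∀ t, δ ≤ t → g t < χ t := by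
    intro t ht
    have ht0 : δ0 ≤ t := le_trans (min_le_left _ _) ht
    have htpos : 0 < t := lt_of_lt_of_le hδ0 ht0
    have hsummt := hsum t htpos.le
    by_cases hcase : t ≤ 1
    · have hterm : c 2 * t ^ 2 ≤ χ t :=
        Summable.le_tsum hsummt 2 fun j _ => mul_nonneg (hcnonneg j) (pow_nonneg htpos.le j)
      have hd2 : δ0 ^ 2 ≤ t ^ 2 := pow_le_pow_left₀ hδ0.le ht0 2
      have h1 : a 0 ≤ c 2 * t ^ 2 := by
        rw [hc2, hb, div_mul_eq_mul_div, mul_div_assoc]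
        have h2 : (1 : ℝ) ≤ t ^ 2 / δ0 ^ 2 := (one_le_div (pow_pos hδ0 2)).2 hd2
        have h4 : a 0 * 1 ≤ a 0 * (t ^ 2 / δ0 ^ 2) := mul_le_mul_of_nonneg_left h2 (hapos 0).le
        linarith
      have h3 : g t < a 0 := hag 0 t (by push_cast; linarith)
      linarith
    · push_neg at hcase
      set n : ℕ := ⌊t⌋₊ with hn
      have hn1 : 1 ≤ n := Nat.le_floor (by exact_mod_cast hcase.le)
      set k : ℕ := n - 1 with hk
      have hkn : k + 1 = n := by omega
      have hknr : ((k : ℝ) + 1) = (n : ℝ) := by exact_mod_cast congrArg (Nat.cast (R := ℝ)) hkn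
      have hkt : (k : ℝ) + 1 ≤ t := by
        rw [hknr]; exact Nat.floor_le htpos.le
      have htk2 : t < (k : ℝ) + 2 := by
        have := Nat.lt_floor_add_one t
        rw [← hn] at this
        linarith [hknr]
      have hterm : c (e k) * t ^ e k ≤ χ t :=
        Summable.le_tsum hsummt (e k) fun j _ => mul_nonneg (hcnonneg j) (pow_nonneg htpos.le j)
      have hkpos : (0 : ℝ) < (k : ℝ) + 1 := by positivity
      have hone : (1 : ℝ) ≤ ((k : ℝ) + 1)⁻¹ * t := by
        rw [inv_mul_eq_div, le_div_iff₀ hkpos, one_mul]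
        exact hkt
      have h1 : a k ≤ c (e k) * t ^ e k := by
        rw [hce k, mul_assoc, ← mul_pow]
        have hpw : (1 : ℝ) ≤ (((k : ℝ) + 1)⁻¹ * t) ^ e k := by
          calc (1 : ℝ) = 1 ^ e k := (one_pow _).symm
            _ ≤ (((k : ℝ) + 1)⁻¹ * t) ^ e k := pow_le_pow_left₀ zero_le_one hone _
        have h4 : a k * 1 ≤ a k * (((k : ℝ) + 1)⁻¹ * t) ^ e k :=
          mul_le_mul_of_nonneg_left hpw (hapos k).le
        linarith
      have h3 : g t < a k := hag k t htk2.le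
      linarith
  exact ⟨χ, hcontdiff, hmono, hconv, hχnonneg, hχzero, hdom⟩

/-- Lemma 6.5 / lem-PSH4. Let `X` be a metric space, `Z ⊆ X` closed,
`U, V` open with `Z ⊆ U` and `closure U ⊆ V`. Suppose `φ : V → (0,∞)` is continuous and an
exhaustion relative to `X` (sublevel sets relatively compact in `X`), and `ψ : X → ℝ₊` is
continuous with `ψ⁻¹({0}) ⊆ Z` and `ψ` restricted to `X∖U` an exhaustion. Then for any
open `V'` with `U ⊆ V'` and `closure V' ⊆ V`, there is an increasing smooth convex
`χ : ℝ₊ → ℝ₊` with `χ(0) = 0` and `χ∘ψ > φ` on `V'∖U`. -/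
theorem stmt5 {X : Type*} [MetricSpace X]
    (Z U V : Set X) (hZcl : IsClosed Z) (hUop : IsOpen U) (hVop : IsOpen V)
    (hZU : Z ⊆ U) (hUV : closure U ⊆ V)
    (φ : X → ℝ) (hφcont : ContinuousOn φ V) (hφpos : ∀ x ∈ V, 0 < φ x)
    (hφexh : ∀ c : ℝ, IsCompact (closure {x ∈ V | φ x ≤ c}))
    (ψ : X → ℝ) (hψcont : Continuous ψ) (hψ0 : ∀ x, 0 ≤ ψ x)
    (hψZ : {x | ψ x = 0} ⊆ Z)
    (hψexh : ∀ c : ℝ, IsCompact {x | x ∉ U ∧ ψ x ≤ c})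
    (V' : Set X) (hV'op : IsOpen V') (hUV' : U ⊆ V') (hV'V : closure V' ⊆ V) :
    ∃ χ : ℝ → ℝ, ContDiff ℝ (⊤ : ℕ∞) χ ∧ StrictMonoOn χ (Set.Ici 0) ∧
      ConvexOn ℝ (Set.Ici 0) χ ∧ (∀ t, 0 ≤ t → 0 ≤ χ t) ∧ χ 0 = 0 ∧
      ∀ x ∈ V' \ U, φ x < χ (ψ x) := by
  classical
  set K : ℝ → Set X := fun c => closure V' ∩ {x | x ∉ U ∧ ψ x ≤ c} with hK
  have hKcomp : ∀ c, IsCompact (K c) := fun c => (hψexh c).inter_left isClosed_closure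
  have hKV : ∀ c, K c ⊆ V := fun c x hx => hV'V hx.1
  have hbdd : ∀ c, BddAbove (φ '' K c) := fun c =>
    ((hKcomp c).image_of_continuousOn (hφcont.mono (hKV c))).bddAbove
  set g : ℝ → ℝ := fun c => sSup (φ '' K c) with hgdef
  have hg : ∀ c : ℝ, ∃ M, ∀ t ≤ c, g t ≤ M := by
    intro c
    refine ⟨max (g c) 0, fun t htc => ?_⟩
    rcases (φ '' K t).eq_empty_or_nonempty with h | h
    · have : g t = 0 := by simp only [hgdef]; rw [h, Real.sSup_empty]
      rw [this]; exact le_max_right _ _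
    · refine le_trans (csSup_le_csSup (hbdd c) h (Set.image_mono ?_)) (le_max_left _ _)
      exact fun x hx => ⟨hx.1, hx.2.1, hx.2.2.trans htc⟩
  obtain ⟨δ, hδpos, hδle⟩ : ∃ δ : ℝ, 0 < δ ∧ ∀ x ∈ V' \ U, δ ≤ ψ x := by
    rcases (K 1).eq_empty_or_nonempty with hne | hne
    · refine ⟨1, one_pos, fun x hx => ?_⟩
      by_contra h
      push_neg at h
      have : x ∈ K 1 := ⟨subset_closure hx.1, hx.2, h.le⟩
      rw [hne] at this
      exact this
    · obtain ⟨x0, hx0, hmin⟩ := (hKcomp 1).exists_isMinOn hne hψcont.continuousOn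
      have hx0pos : 0 < ψ x0 := by
        rcases (hψ0 x0).lt_or_eq with h | h
        · exact h
        · exact absurd (hZU (hψZ (show ψ x0 = 0 from h.symm))) hx0.2.1
      refine ⟨min (ψ x0) 1, lt_min hx0pos one_pos, fun x hx => ?_⟩
      by_cases hψx : ψ x ≤ 1
      · exact le_trans (min_le_left _ _)
          ((isMinOn_iff.1 hmin) x ⟨subset_closure hx.1, hx.2, hψx⟩)
      · exact le_trans (min_le_right _ _) (not_le.1 hψx).le
  obtain ⟨χ, h1, h2, h3, h4, h5, h6⟩ := stmt5_aux g δ hδpos hg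
  refine ⟨χ, h1, h2, h3, h4, h5, fun x hx => ?_⟩
  have hmem : x ∈ K (ψ x) := ⟨subset_closure hx.1, hx.2, le_refl _⟩
  have hφg : φ x ≤ g (ψ x) := le_csSup (hbdd _) ⟨x, hmem, rfl⟩
  exact lt_of_le_of_lt hφg (h6 _ (hδle x hx))
end

section
/- Let B be a diagonal (n−1)×(n−1) matrix with positive rational diagonal entries, and let l = ℚ(√−d) be an imaginary quadratic field. Then the group U_l := {M ∈ Mat(n−1, l) : Mᵀ B conj(M) = B} is dense in U := {M ∈ Mat(n−1, ℂ) : Mᵀ B conj(M) = B}. -/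
open Matrix Complex Set Polynomial Filter

noncomputable section
namespace Stmt10Aux

variable {m : ℕ}

lemma sqrtd_sq (d : ℕ) : ((Real.sqrt d : ℝ) : ℂ) ^ 2 = (d : ℂ) := by
  rw [← Complex.ofReal_pow, Real.sq_sqrt (Nat.cast_nonneg d)]; simp

/-- the subfield ℚ(√-d) of ℂ -/
def L (d : ℕ) (hd : 0 < d) : Subfield ℂ where
  carrier := {z | ∃ a c : ℚ, z = (a : ℂ) + (c : ℂ) * Complex.I * ((Real.sqrt d : ℝ) : ℂ)}
  zero_mem' := ⟨0, 0, by simp⟩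
  one_mem' := ⟨1, 0, by simp⟩
  add_mem' := by
    rintro x y ⟨a, c, rfl⟩ ⟨a', c', rfl⟩
    exact ⟨a + a', c + c', by push_cast; ring⟩
  neg_mem' := by
    rintro x ⟨a, c, rfl⟩
    exact ⟨-a, -c, by push_cast; ring⟩
  mul_mem' := by
    rintro x y ⟨a, c, rfl⟩ ⟨a', c', rfl⟩
    refine ⟨a * a' - c * c' * d, a * c' + a' * c, ?_⟩
    have hs := sqrtd_sq d
    have hI : (Complex.I : ℂ) ^ 2 = -1 := Complex.I_sq
    push_cast
    linear_combination (c : ℂ) * c' * I ^ 2 * hs + (c : ℂ) * c' * (d : ℂ) * hI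
  inv_mem' := by
    intro x hx
    obtain ⟨a, c, rfl⟩ := hx
    by_cases h0 : (a : ℂ) + (c : ℂ) * Complex.I * ((Real.sqrt d : ℝ) : ℂ) = 0
    · rw [h0]; exact ⟨0, 0, by simp⟩
    · have hq : (a^2 + c^2 * d : ℚ) ≠ 0 := by
        intro h
        have hd' : (0:ℚ) < d := by exact_mod_cast hd
        have h1 : 0 ≤ c^2 * (d:ℚ) := mul_nonneg (sq_nonneg c) hd'.le
        have ha2 : a^2 = 0 := le_antisymm (by linarith) (sq_nonneg a)
        have hc2 : c^2 = 0 := by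
          have : c^2 * (d:ℚ) = 0 := by linarith
          exact (mul_eq_zero.mp this).resolve_right (by positivity)
        have ha : a = 0 ∧ c = 0 := ⟨pow_eq_zero_iff (by norm_num) |>.mp ha2, pow_eq_zero_iff (by norm_num) |>.mp hc2⟩
        apply h0
        rw [ha.1, ha.2]; simp
      have hz : ((a^2 + c^2*d : ℚ) : ℂ) ≠ 0 := by exact_mod_cast hq
      refine ⟨a / (a^2 + c^2*d), -c / (a^2 + c^2*d), ?_⟩
      have hs := sqrtd_sq d
      have hI : (Complex.I : ℂ) ^ 2 = -1 := Complex.I_sq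
      refine (inv_eq_of_mul_eq_one_right ?_)
      have hq2 : ((a:ℂ)^2 + (c:ℂ)^2 * (d:ℂ)) ≠ 0 := by
        intro h; apply hz; push_cast; linear_combination h
      have key : (((a:ℂ) + (c:ℂ) * Complex.I * ((Real.sqrt d : ℝ) : ℂ)) *
          ((a:ℂ) - (c:ℂ) * Complex.I * ((Real.sqrt d : ℝ) : ℂ))) = ((a:ℂ)^2 + (c:ℂ)^2 * (d:ℂ)) := by
        linear_combination (-(c:ℂ)^2 * I^2) * hs + (-(c:ℂ)^2 * (d:ℂ)) * hI
      push_cast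
      set s : ℂ := ((Real.sqrt d : ℝ) : ℂ) with hsdef
      set Q : ℂ := ((a:ℂ)^2 + (c:ℂ)^2 * (d:ℂ)) with hQ
      have expand : ((a:ℂ) + (c:ℂ) * Complex.I * s) * ((a:ℂ)/Q + (-(c:ℂ))/Q * Complex.I * s)
          = (((a:ℂ) + (c:ℂ) * Complex.I * s) * ((a:ℂ) - (c:ℂ) * Complex.I * s)) / Q := by
        ring
      rw [expand, key, div_self hq2]


variable {m : ℕ} (K : Subfield ℂ)

lemma det_mem (A : Matrix (Fin m) (Fin m) ℂ) (h : ∀ i j, A i j ∈ K) : A.det ∈ K := by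
  rw [Matrix.det_apply]
  refine Subfield.sum_mem K fun σ _ => ?_
  refine zsmul_mem ?_ _
  exact Subfield.prod_mem K fun i _ => h _ _

lemma inv_entry_mem (A : Matrix (Fin m) (Fin m) ℂ) (h : ∀ i j, A i j ∈ K) (i j : Fin m) :
    A⁻¹ i j ∈ K := by
  rw [Matrix.inv_def, Ring.inverse_eq_inv']
  simp only [Matrix.smul_apply, smul_eq_mul]
  refine mul_mem (inv_mem (det_mem K A h)) ?_
  rw [Matrix.adjugate_apply]
  refine det_mem K _ fun a b => ?_
  rw [Matrix.updateRow_apply]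
  split
  · rcases eq_or_ne i b with rfl | hne
    · simp only [Pi.single_apply]; split
      · exact one_mem K
      · exact zero_mem K
    · simp only [Pi.single_apply]; split
      · exact one_mem K
      · exact zero_mem K
  · exact h _ _


abbrev cj (M : Matrix (Fin m) (Fin m) ℂ) : Matrix (Fin m) (Fin m) ℂ := M.map (starRingEnd ℂ)

lemma cj_mul (A B : Matrix (Fin m) (Fin m) ℂ) : cj (A * B) = cj A * cj B := Matrix.map_mul
lemma cj_one : cj (1 : Matrix (Fin m) (Fin m) ℂ) = 1 := Matrix.map_one _ (map_zero _) (map_one _)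
lemma cj_sub (A B : Matrix (Fin m) (Fin m) ℂ) : cj (A - B) = cj A - cj B := Matrix.map_sub _ (map_sub _) _ _
lemma cj_add (A B : Matrix (Fin m) (Fin m) ℂ) : cj (A + B) = cj A + cj B := Matrix.map_add _ (map_add _) _ _

lemma det_cj (A : Matrix (Fin m) (Fin m) ℂ) : (cj A).det = (starRingEnd ℂ) A.det := by
  rw [RingHom.map_det]; rfl

lemma det_cj_ne (A : Matrix (Fin m) (Fin m) ℂ) (h : A.det ≠ 0) : (cj A).det ≠ 0 := by
  rw [det_cj, starRingEnd_apply]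
  simpa using h

lemma cj_inv (A : Matrix (Fin m) (Fin m) ℂ) (h : A.det ≠ 0) : cj A⁻¹ = (cj A)⁻¹ := by
  have : cj A * cj A⁻¹ = 1 := by
    rw [← cj_mul, Matrix.mul_nonsing_inv _ (isUnit_iff_ne_zero.mpr h), cj_one]
  exact (Matrix.inv_eq_right_inv this).symm

lemma sandwich (C X : Matrix (Fin m) (Fin m) ℂ) (hC : C.det ≠ 0)
    (h : Cᵀ * X * cj C = 0) : X = 0 := by
  have ht : Cᵀ.det ≠ 0 := by rwa [Matrix.det_transpose]
  have hc : (cj C).det ≠ 0 := det_cj_ne C hC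
  have e1 : Cᵀ⁻¹ * (Cᵀ * X * cj C) * (cj C)⁻¹ = X := by
    calc Cᵀ⁻¹ * (Cᵀ * X * cj C) * (cj C)⁻¹
        = (Cᵀ⁻¹ * Cᵀ) * X * (cj C * (cj C)⁻¹) := by simp only [mul_assoc]
      _ = X := by
          rw [Matrix.nonsing_inv_mul _ (isUnit_iff_ne_zero.mpr ht),
            Matrix.mul_nonsing_inv _ (isUnit_iff_ne_zero.mpr hc), one_mul, mul_one]
  rw [← e1, h, mul_zero, zero_mul]


variable (b : Fin m → ℚ)

abbrev Bmat : Matrix (Fin m) (Fin m) ℂ := Matrix.diagonal (fun i => (b i : ℂ))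

lemma Bmat_transpose : (Bmat b)ᵀ = Bmat b := Matrix.diagonal_transpose _

lemma cj_Bmat : cj (Bmat b) = Bmat b := by
  ext i j
  by_cases h : i = j
  · subst h; simp [Matrix.map_apply, Matrix.diagonal_apply_eq, starRingEnd_apply]
  · simp [Matrix.map_apply, Matrix.diagonal_apply_ne _ h]

-- Cayley: forward direction
lemma cayley_forward (M : Matrix (Fin m) (Fin m) ℂ)
    (hM : Mᵀ * Bmat b * cj M = Bmat b) (hC : (1 + M).det ≠ 0) :
    (2 * (1 + M)⁻¹ - 1)ᵀ * Bmat b + Bmat b * cj (2 * (1 + M)⁻¹ - 1) = 0 ∧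
    (1 + (2 * (1 + M)⁻¹ - 1)).det ≠ 0 := by
  set C : Matrix (Fin m) (Fin m) ℂ := 1 + M with hCdef
  set N : Matrix (Fin m) (Fin m) ℂ := 2 * C⁻¹ - 1 with hNdef
  have hCu : IsUnit C.det := isUnit_iff_ne_zero.mpr hC
  have hCC : C * C⁻¹ = 1 := Matrix.mul_nonsing_inv _ hCu
  have hCC' : C⁻¹ * C = 1 := Matrix.nonsing_inv_mul _ hCu
  have hCN : C * N = 1 - M := by
    have : C * (2 * C⁻¹ - 1) = 2 * (C * C⁻¹) - C := by noncomm_ring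
    rw [hNdef, this, hCC, hCdef]; noncomm_ring
  have hNC : N * C = 1 - M := by
    have : (2 * C⁻¹ - 1) * C = 2 * (C⁻¹ * C) - C := by noncomm_ring
    rw [hNdef, this, hCC', hCdef]; noncomm_ring
  constructor
  · apply sandwich C _ hC
    have h1 : Cᵀ * Nᵀ = 1 - Mᵀ := by
      rw [← Matrix.transpose_mul, hNC, Matrix.transpose_sub, Matrix.transpose_one]
    have h2 : cj N * cj C = 1 - cj M := by
      rw [← cj_mul, hNC, cj_sub, cj_one]
    have h3 : Cᵀ = 1 + Mᵀ := by
      rw [hCdef, Matrix.transpose_add, Matrix.transpose_one]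
    have h4 : cj C = 1 + cj M := by
      rw [hCdef, cj_add, cj_one]
    have key : Cᵀ * (Nᵀ * Bmat b + Bmat b * cj N) * cj C
        = (Cᵀ * Nᵀ) * Bmat b * cj C + Cᵀ * Bmat b * (cj N * cj C) := by noncomm_ring
    rw [key, h1, h2, h4, h3]
    have expand : (1 - Mᵀ) * Bmat b * (1 + cj M) + (1 + Mᵀ) * Bmat b * (1 - cj M)
        = 2 * Bmat b - 2 * (Mᵀ * Bmat b * cj M) := by noncomm_ring
    rw [expand, hM]
    noncomm_ring
  · have h5 : 1 + N = 2 * C⁻¹ := by rw [hNdef]; noncomm_ring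
    have h6 : (2 : Matrix (Fin m) (Fin m) ℂ) * C⁻¹ = (2:ℂ) • C⁻¹ := by
      have : (2 : Matrix (Fin m) (Fin m) ℂ) = (2:ℂ) • 1 := by
        rw [two_smul]; norm_num
      rw [this, smul_mul_assoc, one_mul]
    rw [h5, h6, Matrix.det_smul, Matrix.det_nonsing_inv]
    apply mul_ne_zero (pow_ne_zero _ two_ne_zero)
    rw [Ring.inverse_eq_inv']
    exact inv_ne_zero hC



lemma cayley_backward (N : Matrix (Fin m) (Fin m) ℂ)
    (hN : Nᵀ * Bmat b + Bmat b * cj N = 0) (hD : (1 + N).det ≠ 0) :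
    (2 * (1 + N)⁻¹ - 1)ᵀ * Bmat b * cj (2 * (1 + N)⁻¹ - 1) = Bmat b := by
  set D : Matrix (Fin m) (Fin m) ℂ := 1 + N with hDdef
  set M : Matrix (Fin m) (Fin m) ℂ := 2 * D⁻¹ - 1 with hMdef
  have hDu : IsUnit D.det := isUnit_iff_ne_zero.mpr hD
  have hDD' : D⁻¹ * D = 1 := Matrix.nonsing_inv_mul _ hDu
  have hMD : M * D = 1 - N := by
    have : (2 * D⁻¹ - 1) * D = 2 * (D⁻¹ * D) - D := by noncomm_ring
    rw [hMdef, this, hDD', hDdef]; noncomm_ring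
  have h1 : Dᵀ * Mᵀ = 1 - Nᵀ := by
    rw [← Matrix.transpose_mul, hMD, Matrix.transpose_sub, Matrix.transpose_one]
  have h2 : cj M * cj D = 1 - cj N := by rw [← cj_mul, hMD, cj_sub, cj_one]
  have h3 : Dᵀ = 1 + Nᵀ := by rw [hDdef, Matrix.transpose_add, Matrix.transpose_one]
  have h4 : cj D = 1 + cj N := by rw [hDdef, cj_add, cj_one]
  have key : Dᵀ * (Mᵀ * Bmat b * cj M - Bmat b) * cj D
      = (Dᵀ * Mᵀ) * Bmat b * (cj M * cj D) - Dᵀ * Bmat b * cj D := by noncomm_ring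
  have key2 : Dᵀ * (Mᵀ * Bmat b * cj M - Bmat b) * cj D = 0 := by
    rw [key, h1, h2, h3, h4]
    have expand : (1 - Nᵀ) * Bmat b * (1 - cj N) - (1 + Nᵀ) * Bmat b * (1 + cj N)
        = -(2 * (Nᵀ * Bmat b + Bmat b * cj N)) := by noncomm_ring
    rw [expand, hN]
    noncomm_ring
  have := sandwich D _ hD key2
  rwa [sub_eq_zero] at this

lemma cayley_involution (C : Matrix (Fin m) (Fin m) ℂ) (hC : C.det ≠ 0) :
    2 * (1 + (2 * C⁻¹ - 1))⁻¹ - 1 = C - 1 := by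
  have h5 : 1 + (2 * C⁻¹ - 1) = (2:ℂ) • C⁻¹ := by
    have : (2 : Matrix (Fin m) (Fin m) ℂ) = (2:ℂ) • 1 := by rw [two_smul]; norm_num
    rw [this, smul_mul_assoc, one_mul]; abel
  have h6 : ((2:ℂ) • C⁻¹)⁻¹ = (2:ℂ)⁻¹ • C := by
    apply Matrix.inv_eq_right_inv
    rw [smul_mul_smul_comm, Matrix.nonsing_inv_mul _ (isUnit_iff_ne_zero.mpr hC)]
    norm_num
  rw [h5, h6]
  have : (2 : Matrix (Fin m) (Fin m) ℂ) = (2:ℂ) • 1 := by rw [two_smul]; norm_num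
  rw [this, smul_mul_assoc, one_mul, smul_smul]
  norm_num


lemma antiHerm_entry (b : Fin m → ℚ) (N : Matrix (Fin m) (Fin m) ℂ)
    (h : Nᵀ * Matrix.diagonal (fun i => (b i : ℂ)) + Matrix.diagonal (fun i => (b i : ℂ)) * cj N = 0) :
    ∀ i j, N j i * (b j : ℂ) + (b i : ℂ) * (starRingEnd ℂ) (N i j) = 0 := by
  intro i j
  have := congrFun (congrFun h i) j
  simpa [Matrix.add_apply, Matrix.mul_diagonal, Matrix.diagonal_mul, Matrix.transpose_apply,
    Matrix.map_apply] using this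

lemma antiHerm_of_entry (b : Fin m → ℚ) (N : Matrix (Fin m) (Fin m) ℂ)
    (h : ∀ i j, N j i * (b j : ℂ) + (b i : ℂ) * (starRingEnd ℂ) (N i j) = 0) :
    Nᵀ * Matrix.diagonal (fun i => (b i : ℂ)) + Matrix.diagonal (fun i => (b i : ℂ)) * cj N = 0 := by
  ext i j
  simpa [Matrix.add_apply, Matrix.mul_diagonal, Matrix.diagonal_mul, Matrix.transpose_apply,
    Matrix.map_apply] using h i j

/-- parametrization of anti-Hermitian matrices -/
def phi (b : Fin m → ℚ) (P : Matrix (Fin m) (Fin m) ℂ) : Matrix (Fin m) (Fin m) ℂ :=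
  Matrix.of fun i j =>
    if i < j then P i j
    else if j < i then -((b j : ℂ) / (b i : ℂ)) * (starRingEnd ℂ) (P j i)
    else ((P i i).im : ℂ) * Complex.I

lemma phi_continuous (b : Fin m → ℚ) : Continuous (phi b (m := m)) := by
  apply continuous_matrix
  intro i j
  simp only [phi, Matrix.of_apply]
  split_ifs with h1 h2
  · exact (continuous_apply j).comp (continuous_apply i)
  · exact continuous_const.mul (Complex.continuous_conj.comp
      ((continuous_apply i).comp (continuous_apply j)))
  · exact (Complex.continuous_ofReal.comp
      (Complex.continuous_im.comp ((continuous_apply i).comp (continuous_apply i)))).mul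
      continuous_const

lemma phi_antiHerm (b : Fin m → ℚ) (hb : ∀ i, 0 < b i) (P : Matrix (Fin m) (Fin m) ℂ) :
    ∀ i j, (phi b P) j i * (b j : ℂ) + (b i : ℂ) * (starRingEnd ℂ) ((phi b P) i j) = 0 := by
  intro i j
  have hbne : ∀ k, (b k : ℂ) ≠ 0 := fun k => by
    exact_mod_cast Rat.cast_ne_zero.mpr (hb k).ne'
  rcases lt_trichotomy i j with h | h | h
  · simp only [phi, Matrix.of_apply, if_pos h, if_neg (asymm h), if_neg (ne_of_lt h)]
    field_simp [hbne i, hbne j]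
    ring
  · subst h
    simp only [phi, Matrix.of_apply, lt_irrefl, if_false]
    rw [_root_.map_mul, Complex.conj_ofReal, Complex.conj_I]
    ring
  · simp only [phi, Matrix.of_apply, if_pos h, if_neg (asymm h)]
    simp only [_root_.map_mul, map_neg, map_div₀, Complex.conj_conj, map_ratCast]
    field_simp [hbne i, hbne j]
    ring

lemma phi_fix (b : Fin m → ℚ) (hb : ∀ i, 0 < b i) (N : Matrix (Fin m) (Fin m) ℂ)
    (h : ∀ i j, N j i * (b j : ℂ) + (b i : ℂ) * (starRingEnd ℂ) (N i j) = 0) :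
    phi b N = N := by
  have hbne : ∀ k, (b k : ℂ) ≠ 0 := fun k => by
    exact_mod_cast Rat.cast_ne_zero.mpr (hb k).ne'
  ext i j
  rcases lt_trichotomy i j with hij | hij | hij
  · simp [phi, if_pos hij]
  · subst hij
    simp only [phi, Matrix.of_apply, lt_irrefl, if_false]
    have h0 := h i i
    have hre : (N i i).re = 0 := by
      have h2 : (N i i + (starRingEnd ℂ) (N i i)) * (b i : ℂ) = 0 := by
        rw [add_mul]
        have : (starRingEnd ℂ) (N i i) * (b i:ℂ) = (b i:ℂ) * (starRingEnd ℂ) (N i i) := by ring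
        rw [this]
        exact h0
      have h3 : N i i + (starRingEnd ℂ) (N i i) = 0 := by
        rcases mul_eq_zero.mp h2 with h | h
        · exact h
        · exact absurd h (hbne i)
      rw [Complex.add_conj] at h3
      have : ((2 * (N i i).re : ℝ) : ℂ) = 0 := by exact_mod_cast h3
      have := Complex.ofReal_eq_zero.mp this
      linarith
    apply Complex.ext <;> simp [hre]
  · simp only [phi, Matrix.of_apply, if_neg (asymm hij), if_pos hij]
    have h0 := h j i
    -- N i j * b i + b j * conj (N j i) = 0
    field_simp
    have e : (b j : ℂ) * (starRingEnd ℂ) (N j i) = - (N i j * (b i : ℂ)) := by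
      linear_combination h0
    rw [e, neg_div, neg_neg, mul_div_cancel_right₀ _ (hbne i)]

lemma phi_mem_L (K : Subfield ℂ) (hK1 : ∀ q : ℚ, (q : ℂ) ∈ K)
    (hK2 : ∀ z ∈ K, (starRingEnd ℂ) z ∈ K) (hK3 : ∀ z ∈ K, ((z.im : ℝ):ℂ) * Complex.I ∈ K)
    (b : Fin m → ℚ) (P : Matrix (Fin m) (Fin m) ℂ) (hP : ∀ i j, P i j ∈ K) :
    ∀ i j, phi b P i j ∈ K := by
  intro i j
  simp only [phi, Matrix.of_apply]
  split_ifs with h1 h2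
  · exact hP i j
  · exact mul_mem (neg_mem (div_mem (hK1 _) (hK1 _))) (hK2 _ (hP j i))
  · exact hK3 _ (hP i i)


lemma cj_smul (l : ℂ) (M : Matrix (Fin m) (Fin m) ℂ) :
    cj (l • M) = (starRingEnd ℂ) l • cj M := by
  ext i j; simp [Matrix.map_apply]

lemma unit_smul_mem (b : Fin m → ℚ) (M : Matrix (Fin m) (Fin m) ℂ)
    (hM : Mᵀ * Matrix.diagonal (fun i => (b i : ℂ)) * cj M = Matrix.diagonal (fun i => (b i : ℂ)))
    (l : ℂ) (hl : ‖l‖ = 1) :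
    (l • M)ᵀ * Matrix.diagonal (fun i => (b i : ℂ)) * cj (l • M)
      = Matrix.diagonal (fun i => (b i : ℂ)) := by
  rw [Matrix.transpose_smul, cj_smul, Matrix.smul_mul, Matrix.mul_smul, Matrix.smul_mul,
    smul_smul, hM]
  have h1 : (starRingEnd ℂ) l * l = 1 := by
    rw [← Complex.normSq_eq_conj_mul_self, Complex.normSq_eq_norm_sq, hl]
    norm_num
  rw [h1, one_smul]

lemma det_poly (M : Matrix (Fin m) (Fin m) ℂ) : ∃ p : ℂ[X], p ≠ 0 ∧
    ∀ l : ℂ, p.eval l = (l • M + 1).det := by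
  classical
  set A : Matrix (Fin m) (Fin m) ℂ[X] :=
    (Polynomial.X : ℂ[X]) • (M.map fun z => Polynomial.C z) + 1 with hA
  have h1 : ∀ l : ℂ, (A.det).eval l = (l • M + 1).det := by
    intro l
    have h2 := RingHom.map_det (Polynomial.evalRingHom l) A
    have h3 : A.map (Polynomial.evalRingHom l) = l • M + 1 := by
      ext i j
      simp only [hA, Matrix.map_apply, Matrix.add_apply, Matrix.smul_apply, smul_eq_mul,
        Polynomial.coe_evalRingHom, Polynomial.eval_add, Polynomial.eval_mul, Polynomial.eval_X,
        Polynomial.eval_C]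
      by_cases h : i = j
      · subst h; simp
      · simp [Matrix.one_apply_ne h]
    rw [← h3]
    exact h2
  refine ⟨A.det, ?_, h1⟩
  intro h0
  have := h1 0
  rw [h0] at this
  simp at this

lemma lam_inj : Function.Injective (fun k : ℕ => Complex.exp ((((k:ℝ)+1)⁻¹ : ℝ) * Complex.I)) := by
  intro k k' h
  simp only at h
  rw [Complex.exp_eq_exp_iff_exists_int] at h
  obtain ⟨n, hn⟩ := h
  set a : ℝ := ((k:ℝ)+1)⁻¹ with ha
  set b : ℝ := ((k':ℝ)+1)⁻¹ with hb2
  have hn' : (a:ℂ) * Complex.I = ((b:ℂ) + (n:ℂ) * (2*(Real.pi:ℂ))) * Complex.I := by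
    rw [hn]; ring
  have hc : (a:ℂ) = (b:ℂ) + (n:ℂ) * (2*(Real.pi:ℂ)) := mul_right_cancel₀ Complex.I_ne_zero hn'
  have hr : a = b + (n:ℝ) * (2*Real.pi) := by
    have : ((a:ℝ):ℂ) = ((b + (n:ℝ)*(2*Real.pi) : ℝ):ℂ) := by push_cast; linear_combination hc
    exact_mod_cast this
  have hk1 : (0:ℝ) < (k:ℝ) + 1 := by positivity
  have hk2 : (0:ℝ) < (k':ℝ) + 1 := by positivity
  have ha1 : 0 < a := by positivity
  have ha2 : a ≤ 1 := by
    rw [ha]; rw [inv_le_one_iff₀]; right; linarith [Nat.cast_nonneg (α := ℝ) k]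
  have hb1 : 0 < b := by positivity
  have hb3 : b ≤ 1 := by
    rw [hb2]; rw [inv_le_one_iff₀]; right; linarith [Nat.cast_nonneg (α := ℝ) k']
  have hpi := Real.pi_gt_three
  have hn0 : n = 0 := by
    rcases lt_trichotomy n 0 with hlt | heq | hgt
    · have : (n:ℝ) ≤ -1 := by exact_mod_cast Int.le_of_lt_add_one (by simpa using hlt)
      nlinarith
    · exact heq
    · have : (1:ℝ) ≤ (n:ℝ) := by exact_mod_cast hgt
      nlinarith
  rw [hn0] at hr
  simp at hr
  have : (k:ℝ) + 1 = (k':ℝ) + 1 := by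
    have := inv_injective (hr : a = b)
    simpa [ha, hb2] using this
  exact_mod_cast (by linarith : (k:ℝ) = (k':ℝ))

lemma dense_ustar (b : Fin m → ℚ) (M : Matrix (Fin m) (Fin m) ℂ)
    (hM : Mᵀ * Matrix.diagonal (fun i => (b i : ℂ)) * cj M = Matrix.diagonal (fun i => (b i : ℂ))) :
    M ∈ closure {X : Matrix (Fin m) (Fin m) ℂ |
      (Xᵀ * Matrix.diagonal (fun i => (b i : ℂ)) * cj X = Matrix.diagonal (fun i => (b i : ℂ)))
      ∧ (1 + X).det ≠ 0} := by
  set lam : ℕ → ℂ := fun k => Complex.exp ((((k:ℝ)+1)⁻¹ : ℝ) * Complex.I) with hlam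
  have habs : ∀ k, ‖lam k‖ = 1 := fun k => Complex.norm_exp_ofReal_mul_I _
  obtain ⟨p, hp0, hp⟩ := det_poly M
  have hfin : {k : ℕ | p.IsRoot (lam k)}.Finite := by
    have : {k : ℕ | p.IsRoot (lam k)} ⊆ lam ⁻¹' {x | p.IsRoot x} := fun k hk => hk
    exact ((p.finite_setOf_isRoot hp0).preimage lam_inj.injOn).subset this
  apply mem_closure_of_tendsto (f := fun k : ℕ => lam k • M) (b := Filter.atTop)
  · have h1 : Filter.Tendsto (fun k : ℕ => (((k:ℝ)+1)⁻¹ : ℝ)) Filter.atTop (nhds 0) := by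
      simpa [one_div] using tendsto_one_div_add_atTop_nhds_zero_nat (𝕜 := ℝ)
    have h2 : Filter.Tendsto lam Filter.atTop (nhds 1) := by
      have h3 : Filter.Tendsto (fun k : ℕ => ((((k:ℝ)+1)⁻¹ : ℝ) : ℂ)) Filter.atTop
          (nhds ((0:ℝ):ℂ)) := (Complex.continuous_ofReal.tendsto 0).comp h1
      have h4 := h3.mul_const Complex.I
      rw [Complex.ofReal_zero, zero_mul] at h4
      have h5 := (Complex.continuous_exp.tendsto 0).comp h4
      rw [Complex.exp_zero] at h5
      exact h5
    simpa using h2.smul_const M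
  · rw [← Nat.cofinite_eq_atTop]
    filter_upwards [Set.Finite.eventually_cofinite_notMem hfin] with k hk
    refine ⟨unit_smul_mem b M hM _ (habs k), ?_⟩
    rw [add_comm, ← hp]
    exact hk


lemma mem_L_iff {d : ℕ} {hd : 0 < d} (z : ℂ) :
    z ∈ L d hd ↔ ∃ a c : ℚ, z = (a : ℂ) + (c : ℂ) * Complex.I * ((Real.sqrt d : ℝ) : ℂ) :=
  Iff.rfl

lemma conj_mem_L {d : ℕ} {hd : 0 < d} (z : ℂ) (hz : z ∈ L d hd) :
    (starRingEnd ℂ) z ∈ L d hd := by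
  obtain ⟨a, c, rfl⟩ := hz
  refine ⟨a, -c, ?_⟩
  push_cast
  simp [Complex.conj_I, Complex.conj_ofReal]

lemma im_I_mem_L {d : ℕ} {hd : 0 < d} (z : ℂ) (hz : z ∈ L d hd) :
    ((z.im : ℝ) : ℂ) * Complex.I ∈ L d hd := by
  obtain ⟨a, c, rfl⟩ := hz
  refine ⟨0, c, ?_⟩
  simp [Complex.add_im, Complex.mul_im]
  ring

lemma L_dense {d : ℕ} {hd : 0 < d} : Dense ((L d hd : Subfield ℂ) : Set ℂ) := by
  intro z
  rw [Metric.mem_closure_iff]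
  intro ε hε
  have hs : (0:ℝ) < Real.sqrt d := Real.sqrt_pos.mpr (by exact_mod_cast hd)
  obtain ⟨a, ha⟩ := exists_rat_near z.re (half_pos hε)
  obtain ⟨c, hc⟩ := exists_rat_near (z.im / Real.sqrt d) (div_pos (half_pos hε) hs)
  refine ⟨(a:ℂ) + (c:ℂ) * Complex.I * ((Real.sqrt d : ℝ) : ℂ), ⟨a, c, rfl⟩, ?_⟩
  rw [Complex.dist_eq]
  have him : |z.im - (c:ℝ) * Real.sqrt d| < ε / 2 := by
    have heq : z.im - (c:ℝ) * Real.sqrt d = Real.sqrt d * (z.im / Real.sqrt d - c) := by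
      field_simp
    rw [heq, abs_mul, abs_of_pos hs]
    calc Real.sqrt d * |z.im / Real.sqrt d - (c:ℝ)| < Real.sqrt d * (ε/2 / Real.sqrt d) := by
          exact mul_lt_mul_of_pos_left hc hs
      _ = ε / 2 := by rw [mul_comm, div_mul_cancel₀ _ hs.ne']
  set w : ℂ := (a:ℂ) + (c:ℂ) * Complex.I * ((Real.sqrt d : ℝ) : ℂ)
  have hre : (z - w).re = z.re - a := by simp [w]
  have him2 : (z - w).im = z.im - (c:ℝ) * Real.sqrt d := by simp [w]
  calc ‖z - w‖ ≤ |(z-w).re| + |(z-w).im| := Complex.norm_le_abs_re_add_abs_im _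
    _ < ε := by rw [hre, him2]; linarith

end Stmt10Aux

/-- Let `B` be a diagonal matrix with positive rational diagonal
entries and `l = ℚ(√−d)` an imaginary quadratic field (`d > 0`). Then the group
`U_l = {M with entries in l : M.transpose B conj(M) = B}` is dense in
`U = {M ∈ Mat(m,ℂ) : M.transpose B conj(M) = B}`. -/
theorem stmt10 (d m : ℕ) (hd : 0 < d) (b : Fin m → ℚ) (hb : ∀ i, 0 < b i) :
    closure {M : Matrix (Fin m) (Fin m) ℂ |
        M.transpose * Matrix.diagonal (fun i => (b i : ℂ)) * M.map (starRingEnd ℂ) =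
          Matrix.diagonal (fun i => (b i : ℂ)) ∧
        ∀ i j, ∃ a c : ℚ,
          M i j = (a : ℂ) + (c : ℂ) * Complex.I * ((Real.sqrt d : ℝ) : ℂ)} =
      {M : Matrix (Fin m) (Fin m) ℂ |
        M.transpose * Matrix.diagonal (fun i => (b i : ℂ)) * M.map (starRingEnd ℂ) =
          Matrix.diagonal (fun i => (b i : ℂ))} := by
  classical
  set K : Subfield ℂ := Stmt10Aux.L d hd with hKdef
  set B : Matrix (Fin m) (Fin m) ℂ := Matrix.diagonal (fun i => (b i : ℂ)) with hBdef
  have hSeq : {M : Matrix (Fin m) (Fin m) ℂ |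
        Mᵀ * B * M.map (starRingEnd ℂ) = B ∧
        ∀ i j, ∃ a c : ℚ,
          M i j = (a : ℂ) + (c : ℂ) * Complex.I * ((Real.sqrt d : ℝ) : ℂ)}
      = {M : Matrix (Fin m) (Fin m) ℂ |
          Mᵀ * B * M.map (starRingEnd ℂ) = B ∧ ∀ i j, M i j ∈ K} := by
    rfl
  rw [hSeq]
  set S := {M : Matrix (Fin m) (Fin m) ℂ |
      Mᵀ * B * M.map (starRingEnd ℂ) = B ∧ ∀ i j, M i j ∈ K} with hSdef
  apply subset_antisymm
  · apply closure_minimal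
    · rintro M ⟨h1, _⟩
      exact h1
    · have hc : Continuous fun M : Matrix (Fin m) (Fin m) ℂ =>
          Mᵀ * B * M.map (starRingEnd ℂ) :=
        (continuous_id.matrix_transpose.matrix_mul continuous_const).matrix_mul
          (continuous_id.matrix_map Complex.continuous_conj)
      exact isClosed_eq hc continuous_const
  -- key claim: every U-matrix with invertible 1 + X is in closure S
  · have hK1 : ∀ q : ℚ, (q:ℂ) ∈ K := fun q => ⟨q, 0, by simp⟩
    have hUstar : ∀ X : Matrix (Fin m) (Fin m) ℂ,
        Xᵀ * B * X.map (starRingEnd ℂ) = B → (1 + X).det ≠ 0 → X ∈ closure S := by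
      intro X hX hXdet
      obtain ⟨hNah, hNdet⟩ := Stmt10Aux.cayley_forward b X hX hXdet
      set N : Matrix (Fin m) (Fin m) ℂ := 2 * (1 + X)⁻¹ - 1 with hNdef
      set psi : Matrix (Fin m) (Fin m) ℂ → Matrix (Fin m) (Fin m) ℂ :=
        fun Y => 2 * (1 + Y)⁻¹ - 1 with hpsidef
      have hpsiN : psi N = X := by
        have h := Stmt10Aux.cayley_involution (1 + X) hXdet
        simp only [hpsidef, hNdef, h]
        abel
      have hcont : ContinuousAt psi N := by
        have c1 : Continuous fun Y : Matrix (Fin m) (Fin m) ℂ => 1 + Y :=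
          continuous_const.add continuous_id
        have c2 : ContinuousAt Inv.inv (1 + N) := by
          apply continuousAt_matrix_inv
          rw [Ring.inverse_eq_inv']
          exact continuousAt_inv₀ hNdet
        have c3 : ContinuousAt (fun Y : Matrix (Fin m) (Fin m) ℂ => (1 + Y)⁻¹) N :=
          c2.comp c1.continuousAt
        exact (continuousAt_const.mul c3).sub continuousAt_const
      set V := {P : Matrix (Fin m) (Fin m) ℂ | (1 + P).det ≠ 0} with hVdef
      set W := {P : Matrix (Fin m) (Fin m) ℂ |
          (∀ i j, P i j ∈ K) ∧ Pᵀ * B + B * P.map (starRingEnd ℂ) = 0} with hWdef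
      have hVopen : IsOpen V := by
        have hcd : Continuous fun P : Matrix (Fin m) (Fin m) ℂ => (1 + P).det :=
          (continuous_const.add continuous_id).matrix_det
        exact isOpen_compl_singleton.preimage hcd
      have hNW : N ∈ closure W := by
        have hD : Dense {P : Matrix (Fin m) (Fin m) ℂ | ∀ i j, P i j ∈ K} := by
          have hpi := dense_pi (ι := Fin m) Set.univ
            (fun i _ => dense_pi (ι := Fin m) Set.univ
              (fun j _ => (Stmt10Aux.L_dense (d := d) (hd := hd))))
          have : {P : Matrix (Fin m) (Fin m) ℂ | ∀ i j, P i j ∈ K}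
              = Set.pi Set.univ (fun _ : Fin m =>
                  Set.pi Set.univ fun _ : Fin m => ((K : Subfield ℂ) : Set ℂ)) := by
            ext P
            constructor
            · intro h i _
              intro j _
              exact h i j
            · intro h i j
              exact h i (Set.mem_univ i) j (Set.mem_univ j)
          rw [this]
          exact hpi
        have hfix : Stmt10Aux.phi b N = N :=
          Stmt10Aux.phi_fix b hb N (Stmt10Aux.antiHerm_entry b N hNah)
        have himg := mem_closure_image ((Stmt10Aux.phi_continuous b).continuousAt) (hD N)
        rw [hfix] at himg
        refine closure_mono ?_ himg
        rintro _ ⟨P, hP, rfl⟩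
        exact ⟨Stmt10Aux.phi_mem_L K hK1 (fun z hz => Stmt10Aux.conj_mem_L z hz)
            (fun z hz => Stmt10Aux.im_I_mem_L z hz) b P hP,
          Stmt10Aux.antiHerm_of_entry b _ (Stmt10Aux.phi_antiHerm b hb P)⟩
      have hNT : N ∈ closure (W ∩ V) := by
        rw [mem_closure_iff] at hNW ⊢
        intro o ho hNo
        obtain ⟨z, hz1, hz2⟩ := hNW (o ∩ V) (ho.inter hVopen) ⟨hNo, hNdet⟩
        exact ⟨z, hz1.1, hz2, hz1.2⟩
      have himg2 := mem_closure_image hcont hNT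
      rw [hpsiN] at himg2
      refine closure_mono ?_ himg2
      rintro _ ⟨P, ⟨⟨hPL, hPah⟩, hPdet⟩, rfl⟩
      refine ⟨Stmt10Aux.cayley_backward b P hPah hPdet, ?_⟩
      have hinvP : ∀ i j, (1 + P)⁻¹ i j ∈ K := by
        apply Stmt10Aux.inv_entry_mem
        intro i j
        have : (1 + P) i j = (if i = j then (1:ℂ) else 0) + P i j := by
          simp [Matrix.add_apply, Matrix.one_apply]
        rw [this]
        refine add_mem ?_ (hPL i j)
        split
        · exact one_mem K
        · exact zero_mem K
      intro i j
      have hmem : (2 * (1 + P)⁻¹ - 1 : Matrix (Fin m) (Fin m) ℂ) i j ∈ K := by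
        have : (2 * (1 + P)⁻¹ - 1 : Matrix (Fin m) (Fin m) ℂ) i j
            = (1 + P)⁻¹ i j + (1 + P)⁻¹ i j - (if i = j then (1:ℂ) else 0) := by
          rw [two_mul]
          simp [Matrix.sub_apply, Matrix.add_apply, Matrix.one_apply]
        rw [this]
        refine sub_mem (add_mem (hinvP i j) (hinvP i j)) ?_
        split
        · exact one_mem K
        · exact zero_mem K
      exact hmem
    intro M hM
    have h1 := Stmt10Aux.dense_ustar b M hM
    refine closure_minimal ?_ isClosed_closure h1
    rintro X ⟨hX, hXdet⟩
    exact hUstar X hX hXdet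
end
end

section
/- Let B be an invertible Hermitian matrix and N a matrix with det(I+N) ≠ 0. Then NᵀB·conj(N) = B (i.e. N is in the B-unitary group) if and only if the Cayley transform S(N) = 2(I+N)⁻¹ − I satisfies S(N)ᵀ B = −B·conj(S(N)). -/
/-- Let `B` be an invertible Hermitian matrix and `N` a matrix with
`det(I+N) ≠ 0`. Then `Nᵀ B conj(N) = B` (i.e. `N` is `B`-unitary) iff the Cayley
transform `S(N) = 2(I+N)⁻¹ − I` satisfies `S(N)ᵀ B = −B·conj(S(N))`. -/
theorem stmt12 {n : ℕ} (B N : Matrix (Fin n) (Fin n) ℂ)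
    (hB : B.IsHermitian) (hBdet : B.det ≠ 0) (hN : (1 + N).det ≠ 0) :
    (N.transpose * B * N.map (starRingEnd ℂ) = B) ↔
      ((2 : ℂ) • (1 + N)⁻¹ - 1).transpose * B =
        -(B * ((2 : ℂ) • (1 + N)⁻¹ - 1).map (starRingEnd ℂ)) := by
  set c := starRingEnd ℂ with hc
  set M : Matrix (Fin n) (Fin n) ℂ := 1 + N with hM
  set S : Matrix (Fin n) (Fin n) ℂ := (2 : ℂ) • M⁻¹ - 1 with hS
  have hMu : IsUnit M.det := isUnit_iff_ne_zero.mpr hN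
  have hMTu : IsUnit M.transpose.det := by rwa [Matrix.det_transpose]
  have hMCu : IsUnit (M.map c).det := by
    rw [show (M.map c).det = c M.det from (RingHom.map_det c M).symm]
    simpa using hN
  have hSM : S * M = 1 - N := by
    rw [hS, sub_mul, Matrix.smul_mul, Matrix.nonsing_inv_mul _ hMu, one_mul, hM]
    module
  have hT : M.transpose * S.transpose = 1 - N.transpose := by
    rw [← Matrix.transpose_mul, hSM, Matrix.transpose_sub, Matrix.transpose_one]
  have hCm : S.map c * M.map c = 1 - N.map c := by
    rw [← Matrix.map_mul, hSM]
    ext i j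
    simp [Matrix.one_apply, apply_ite c]
  have hMT : M.transpose = 1 + N.transpose := by
    rw [hM, Matrix.transpose_add, Matrix.transpose_one]
  have hMC : M.map c = 1 + N.map c := by
    rw [hM]; ext i j; simp [Matrix.one_apply, apply_ite c]
  have cancel : ∀ X Y : Matrix (Fin n) (Fin n) ℂ,
      M.transpose * X * M.map c = M.transpose * Y * M.map c → X = Y := by
    intro X Y h
    have h2 : X * M.map c = Y * M.map c := by
      have h1 := congrArg (M.transpose⁻¹ * ·) h
      simpa [← mul_assoc, Matrix.nonsing_inv_mul _ hMTu] using h1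
    have h3 := congrArg (· * (M.map c)⁻¹) h2
    simpa [mul_assoc, Matrix.mul_nonsing_inv _ hMCu] using h3
  have E1 : M.transpose * (S.transpose * B) * M.map c
      = (1 - N.transpose) * B * (1 + N.map c) := by
    rw [show M.transpose * (S.transpose * B) = (M.transpose * S.transpose) * B from
      (mul_assoc _ _ _).symm, hT, hMC]
  have E2 : M.transpose * (-(B * S.map c)) * M.map c
      = -((1 + N.transpose) * B * (1 - N.map c)) := by
    rw [mul_neg, neg_mul, show M.transpose * (B * S.map c) * M.map c
      = M.transpose * B * (S.map c * M.map c) by noncomm_ring, hCm, hMT]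
  constructor
  · intro h
    apply cancel
    rw [E1, E2, ← sub_eq_zero]
    have hexp : (1 - N.transpose) * B * (1 + N.map c)
        - (-((1 + N.transpose) * B * (1 - N.map c)))
        = (B - N.transpose * B * N.map c) + (B - N.transpose * B * N.map c) := by
      noncomm_ring
    rw [hexp, h, sub_self, add_zero]
  · intro h
    have heq : (1 - N.transpose) * B * (1 + N.map c)
        = -((1 + N.transpose) * B * (1 - N.map c)) := by
      rw [← E1, ← E2, h]
    have h3 : (N.transpose * B * N.map c + N.transpose * B * N.map c) - (B + B) = 0 := by
      calc (N.transpose * B * N.map c + N.transpose * B * N.map c) - (B + B)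
          = (-((1 + N.transpose) * B * (1 - N.map c)))
            - (1 - N.transpose) * B * (1 + N.map c) := by noncomm_ring
        _ = 0 := by rw [← heq, sub_self]
    have h4 := sub_eq_zero.mp h3
    rw [← two_smul ℂ, ← two_smul ℂ] at h4
    exact smul_right_injective _ two_ne_zero h4
end
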